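/- A maximal ideal M of B₁(X) is real if and only if Z_B[M] is closed under countable intersections, if and only if Z_B[M] has the countable intersection property (every countable subfamily has nonempty intersection). -/

import Mathlib

open Filter Topology

/-- A function `f : X → ℝ` is Baire one if it is a pointwise limit of a
sequence of continuous functions. -/
def IsBaireOne {X : Type*} [TopologicalSpace X] (f : X → ℝ) : Prop :=
  ∃ F : ℕ → C(X, ℝ), ∀ x, Tendsto (fun n => F n x) atTop (𝓝 (f x))

/-- The ring `B₁(X)` of real valued Baire one functions on `X`, as a subring
of the ring of all functions `X → ℝ`. -/
def B1 (X : Type*) [TopologicalSpace X] : Subring (X → ℝ) where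
  carrier := {f | IsBaireOne f}
  zero_mem' := ⟨fun _ => 0, fun x => by simpa using tendsto_const_nhds⟩
  one_mem' := ⟨fun _ => 1, fun x => by simpa using tendsto_const_nhds⟩
  add_mem' := by
    rintro f g ⟨F, hF⟩ ⟨G, hG⟩
    exact ⟨fun n => F n + G n, fun x => by simpa using (hF x).add (hG x)⟩
  mul_mem' := by
    rintro f g ⟨F, hF⟩ ⟨G, hG⟩
    exact ⟨fun n => F n * G n, fun x => by simpa using (hF x).mul (hG x)⟩
  neg_mem' := by
    rintro f ⟨F, hF⟩
    exact ⟨fun n => -F n, fun x => by simpa using (hF x).neg⟩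

variable {X : Type*} [TopologicalSpace X]

/-- The constant function with value `r`, as an element of `B₁(X)`. -/
def bconst (X : Type*) [TopologicalSpace X] (r : ℝ) : B1 X :=
  ⟨fun _ => r, ⟨fun _ => ContinuousMap.const X r, fun x => by simpa using tendsto_const_nhds⟩⟩

theorem babs_mem (f : B1 X) : (fun x => |(f : X → ℝ) x|) ∈ B1 X := by
  obtain ⟨F, hF⟩ := f.2
  exact ⟨fun n => ⟨fun x => |F n x|, (F n).continuous.abs⟩, fun x => (hF x).abs⟩

/-- The absolute value `|f|` of a Baire one function. -/
def babs (f : B1 X) : B1 X := ⟨fun x => |(f : X → ℝ) x|, babs_mem f⟩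

/-- The zero set `Z(f)` of `f ∈ B₁(X)`. -/
def zset (f : B1 X) : Set X := {x | (f : X → ℝ) x = 0}

/-- `Z(B₁(X))`, the family of all zero sets of Baire one functions on `X`. -/
def zsets (X : Type*) [TopologicalSpace X] : Set (Set X) := {Z | ∃ f : B1 X, zset f = Z}

/-- `Z_B[I] = {Z(f) : f ∈ I}` for an ideal `I` of `B₁(X)`. -/
def zbi (I : Ideal (B1 X)) : Set (Set X) := {Z | ∃ f ∈ I, zset f = Z}

/-- A `Z_B`-filter on `X`: a nonempty family of zero sets of Baire one functions,
not containing `∅`, closed under finite intersections and upward closed in `Z(B₁(X))`. -/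
def IsZBFilter (F : Set (Set X)) : Prop :=
  F.Nonempty ∧ F ⊆ zsets X ∧ ∅ ∉ F ∧
    (∀ Z₁ ∈ F, ∀ Z₂ ∈ F, Z₁ ∩ Z₂ ∈ F) ∧
    (∀ Z ∈ F, ∀ Z' ∈ zsets X, Z ⊆ Z' → Z' ∈ F)

/-- A `Z_B`-ultrafilter on `X`: a maximal `Z_B`-filter. -/
def IsZBUltrafilter (U : Set (Set X)) : Prop :=
  IsZBFilter U ∧ ∀ F : Set (Set X), IsZBFilter F → U ⊆ F → F = U

/-- The finite intersection property: every nonempty finite subfamily has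
nonempty intersection. -/
def FIP {X : Type*} (B : Set (Set X)) : Prop :=
  ∀ S : Finset (Set X), ↑S ⊆ B → S.Nonempty → (⋂₀ (S : Set (Set X))).Nonempty

/-- An ideal `I` of `B₁(X)` is a `Z_B`-ideal if `Z_B⁻¹[Z_B[I]] = I`. -/
def IsZBIdeal (I : Ideal (B1 X)) : Prop :=
  ∀ f : B1 X, zset f ∈ zbi I → f ∈ I

/-- An ideal of `B₁(X)` is fixed if the zero sets of its members have a common point. -/
def FixedIdeal (I : Ideal (B1 X)) : Prop :=
  (⋂ f ∈ (I : Set (B1 X)), zset f).Nonempty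

/-- A prime `Z_B`-filter. -/
def IsPrimeZBFilter (F : Set (Set X)) : Prop :=
  IsZBFilter F ∧ ∀ Z₁ ∈ zsets X, ∀ Z₂ ∈ zsets X, Z₁ ∪ Z₂ ∈ F → Z₁ ∈ F ∨ Z₂ ∈ F

/-- `M(f) ≥ 0` in the quotient `B₁(X)/M`: the coset contains a nonnegative function. -/
def QNonneg (M : Ideal (B1 X)) (a : B1 X ⧸ M) : Prop :=
  ∃ g : B1 X, (∀ x, 0 ≤ (g : X → ℝ) x) ∧ Ideal.Quotient.mk M g = a

/-- `M(f) > 0` in the quotient `B₁(X)/M`. -/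
def QPos (M : Ideal (B1 X)) (a : B1 X ⧸ M) : Prop := QNonneg M a ∧ a ≠ 0

/-- A maximal ideal `M` of `B₁(X)` is real if the canonical copy of `ℝ`
(via constant functions) is all of `B₁(X)/M`. -/
def RealIdeal (M : Ideal (B1 X)) : Prop :=
  Function.Surjective (fun r : ℝ => Ideal.Quotient.mk M (bconst X r))

/-- An `F_σ` subset: a countable union of closed sets. -/
def IsFSigma {X : Type*} [TopologicalSpace X] (s : Set X) : Prop :=
  ∃ F : ℕ → Set X, (∀ n, IsClosed (F n)) ∧ s = ⋃ n, F n

/-!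
If `M` is real and `Z(fₙ) ∈ Z_B[M]` had empty intersection, then `s = Σₙ (|fₙ| ∧ 2⁻ⁿ)` would be
positive everywhere, and `s ≡ r (mod M)` forces `r` to be a value of `s`, so `r > 0`. But
`s ≤ 2¹⁻ᴺ` on the common zero set of `f₀, …, f_{N-1}`, a member of `Z_B[M]` and hence meeting
`{s = r} ∈ Z_B[M]`; this is absurd once `2¹⁻ᴺ < r`.

Under the countable intersection property `s ∈ M` for `fₙ ∈ M`, since otherwise some `m ∈ M`
has `Z(m) ∩ Z(s) = ∅`; so `Z_B[M]` is closed under countable intersections, with `Z(s) = ⋂ Z(fₙ)`.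

Conversely, for `g ∈ B₁(X)` primality puts `{g ≤ q}` or `{g ≥ q}` into `Z_B[M]` for every `q`.
With `r` the infimum of the `q` of the first kind, countably many of these sets intersect to a
member of `Z_B[M]` inside `{g = r}`, and maximal ideals are closed upwards along zero sets, so
`g - r ∈ M`.
-/

namespace IsBaireOne

theorem comp {φ : ℝ → ℝ} (hφ : Continuous φ) {f : X → ℝ} (hf : IsBaireOne f) :
    IsBaireOne fun x => φ (f x) := by
  obtain ⟨F, hF⟩ := hf
  exact ⟨fun n => ⟨φ ∘ F n, hφ.comp (F n).continuous⟩, fun x => (hφ.tendsto _).comp (hF x)⟩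

theorem inv {f : X → ℝ} (hf : IsBaireOne f) (hf0 : ∀ x, f x ≠ 0) :
    IsBaireOne fun x => (f x)⁻¹ := by
  obtain ⟨F, hF⟩ := hf
  refine ⟨fun n => ⟨fun x => F n x / (F n x ^ 2 + 1 / (n + 1)), ?_⟩, fun x => ?_⟩
  · exact (F n).continuous.div ((F n).continuous.pow 2 |>.add continuous_const)
      fun x => by positivity
  · have hden := ((hF x).pow 2).add tendsto_one_div_add_atTop_nhds_zero_nat
    have hlim := (hF x).div hden (by simpa using hf0 x)
    rwa [add_zero, sq, div_mul_cancel_left₀ (hf0 x)] at hlim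

theorem tsum_of_abs_le {f : ℕ → X → ℝ} (hf : ∀ n, IsBaireOne (f n)) {u : ℕ → ℝ}
    (hu : Summable u) (hfu : ∀ n x, |f n x| ≤ u n) : IsBaireOne fun x => ∑' n, f n x := by
  choose F hF using hf
  -- Clamping the approximants of `f n` to `[-u n, u n]` makes the series dominated by `u`.
  let G : ℕ → ℕ → C(X, ℝ) := fun m n => ⟨fun x => max (-u n) (min (F n m x) (u n)), by fun_prop⟩
  have hG : ∀ m n x, |G m n x| ≤ u n := fun m n x =>
    abs_le.2 ⟨le_max_left _ _,
      max_le (by linarith [abs_nonneg (f n x), hfu n x]) (min_le_right _ _)⟩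
  refine ⟨fun m => ⟨fun x => ∑' n, G m n x,
    continuous_tsum (fun n => (G m n).continuous) hu fun n x => (hG m n x)⟩, fun x => ?_⟩
  refine tendsto_tsum_of_dominated_convergence hu (fun n => ?_) (.of_forall fun m n => hG m n x)
  obtain ⟨hlo, hhi⟩ := abs_le.1 (hfu n x)
  have hclamp : max (-u n) (min (f n x) (u n)) = f n x := by
    rw [min_eq_left hhi, max_eq_right hlo]
  have hlim := (tendsto_const_nhds (x := -u n)).max ((hF n x).min (tendsto_const_nhds (x := u n)))
  rw [hclamp] at hlim
  exact hlim

end IsBaireOne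

theorem isUnit_of_forall_ne_zero {f : B1 X} (hf : ∀ x, (f : X → ℝ) x ≠ 0) : IsUnit f :=
  IsUnit.of_mul_eq_one (⟨_, IsBaireOne.inv f.2 hf⟩ : B1 X)
    (Subtype.ext (funext fun x => mul_inv_cancel₀ (hf x)))

theorem zset_mul_self_add_mul_self (f g : B1 X) : zset (f * f + g * g) = zset f ∩ zset g := by
  ext x
  simp [zset, mul_self_add_mul_self_eq_zero]

section ZeroSetsOfIdeals

variable {I : Ideal (B1 X)}

theorem nonempty_of_mem_zbi (hI : I ≠ ⊤) {Z : Set X} (hZ : Z ∈ zbi I) : Z.Nonempty := by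
  obtain ⟨f, hf, rfl⟩ := hZ
  by_contra h
  exact hI (I.eq_top_of_isUnit_mem hf (isUnit_of_forall_ne_zero fun x hx => h ⟨x, hx⟩))

theorem inter_mem_zbi {Z₁ Z₂ : Set X} (h₁ : Z₁ ∈ zbi I) (h₂ : Z₂ ∈ zbi I) :
    Z₁ ∩ Z₂ ∈ zbi I := by
  obtain ⟨f, hf, rfl⟩ := h₁
  obtain ⟨g, hg, rfl⟩ := h₂
  exact ⟨f * f + g * g, I.add_mem (I.mul_mem_left f hf) (I.mul_mem_left g hg),
    zset_mul_self_add_mul_self f g⟩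

theorem biInter_lt_mem_zbi {Z : ℕ → Set X} (hZ : ∀ n, Z n ∈ zbi I) (N : ℕ) :
    ⋂ n < N, Z n ∈ zbi I := by
  induction N with
  | zero => exact ⟨0, I.zero_mem, by ext; simp [zset]⟩
  | succ N ih => rw [Set.biInter_lt_succ]; exact inter_mem_zbi ih (hZ N)

theorem setOf_le_mem_zbi_or_setOf_ge_mem_zbi (hI : I.IsPrime) (g : B1 X) (q : ℝ) :
    {x | (g : X → ℝ) x ≤ q} ∈ zbi I ∨ {x | q ≤ (g : X → ℝ) x} ∈ zbi I := by
  let u : B1 X := ⟨fun x => max ((g : X → ℝ) x - q) 0,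
    IsBaireOne.comp (φ := fun t => max (t - q) 0) (by fun_prop) g.2⟩
  let v : B1 X := ⟨fun x => max (q - (g : X → ℝ) x) 0,
    IsBaireOne.comp (φ := fun t => max (q - t) 0) (by fun_prop) g.2⟩
  have huv : u * v = 0 := by
    ext x
    rcases le_total ((g : X → ℝ) x) q with h | h <;> simp [u, v, max_eq_right (sub_nonpos.2 h)]
  refine (hI.mem_or_mem (huv ▸ I.zero_mem)).imp (fun hu => ⟨u, hu, ?_⟩) (fun hv => ⟨v, hv, ?_⟩)
  · ext x; simp [zset, u]
  · ext x; simp [zset, v]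

end ZeroSetsOfIdeals

section MaximalIdeals

variable {M : Ideal (B1 X)}

theorem exists_mem_disjoint_zset_of_notMem (hM : M.IsMaximal) {h : B1 X} (hh : h ∉ M) :
    ∃ m ∈ M, Disjoint (zset h) (zset m) := by
  obtain ⟨a, m, hm, hone⟩ := hM.exists_inv hh
  refine ⟨m, hm, Set.disjoint_left.2 fun x (hx : (h : X → ℝ) x = 0) (hmx : (m : X → ℝ) x = 0) => ?_⟩
  have hone_x := congrFun (congrArg Subtype.val hone) x
  simp [hx, hmx] at hone_x

theorem mem_of_zset_subset (hM : M.IsMaximal) {w h : B1 X} (hw : w ∈ M)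
    (hwh : zset w ⊆ zset h) : h ∈ M := by
  by_contra hh
  obtain ⟨m, hm, hdisj⟩ := exists_mem_disjoint_zset_of_notMem hM hh
  obtain ⟨x, hxw, hxm⟩ := nonempty_of_mem_zbi hM.ne_top (inter_mem_zbi ⟨w, hw, rfl⟩ ⟨m, hm, rfl⟩)
  exact hdisj.ne_of_mem (hwh hxw) hxm rfl

end MaximalIdeals

theorem exists_subset_setOf_eq_of_iInter_mem {α : Type*} {𝓕 : Set (Set α)} (hempty : ∅ ∉ 𝓕)
    (hinter₂ : ∀ A ∈ 𝓕, ∀ B ∈ 𝓕, A ∩ B ∈ 𝓕)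
    (hinter : ∀ Z : ℕ → Set α, (∀ n, Z n ∈ 𝓕) → ⋂ n, Z n ∈ 𝓕) {g : α → ℝ}
    (hg : ∀ q : ℝ, {x | g x ≤ q} ∈ 𝓕 ∨ {x | q ≤ g x} ∈ 𝓕) :
    ∃ r : ℝ, ∃ W ∈ 𝓕, W ⊆ {x | g x = r} := by
  set L := {q : ℝ | {x | g x ≤ q} ∈ 𝓕}
  have hsep : ∀ q q', q ∈ L → {x | q' ≤ g x} ∈ 𝓕 → q' ≤ q := by
    intro q q' hq hq'
    by_contra! hlt
    refine hempty (Set.eq_empty_iff_forall_notMem.2 (fun x hx => ?_) ▸ hinter₂ _ hq _ hq')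
    exact hlt.not_ge (hx.2.trans hx.1)
  have hL : L.Nonempty := by
    by_contra hL
    refine hempty (Set.eq_empty_iff_forall_notMem.2 (fun x hx => ?_) ▸
      hinter (fun n : ℕ => {x | (n : ℝ) ≤ g x}) fun n => (hg n).resolve_left fun h => hL ⟨n, h⟩)
    obtain ⟨n, hn⟩ := exists_nat_gt (g x)
    exact hn.not_ge (Set.mem_iInter.1 hx n)
  obtain ⟨q₀, hq₀⟩ : ∃ q₀, {x | q₀ ≤ g x} ∈ 𝓕 := by
    by_contra! hU
    refine hempty (Set.eq_empty_iff_forall_notMem.2 (fun x hx => ?_) ▸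
      hinter (fun n : ℕ => {x | g x ≤ -n}) fun n => (hg _).resolve_right (hU _))
    obtain ⟨n, hn⟩ := exists_nat_gt (-g x)
    have : g x ≤ -n := Set.mem_iInter.1 hx n
    linarith
  have hbdd : BddBelow L := ⟨q₀, fun q hq => hsep q q₀ hq hq₀⟩
  set r := sInf L
  have hε := tendsto_one_div_add_atTop_nhds_zero_nat (𝕜 := ℝ)
  have hεpos : ∀ n : ℕ, (0 : ℝ) < 1 / (n + 1) := fun n => Nat.one_div_pos_of_nat
  choose q hqL hqr using fun n : ℕ => exists_lt_of_csInf_lt hL (lt_add_of_pos_right r (hεpos n))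
  have hbelow : ∀ n : ℕ, {x | r - 1 / (n + 1) ≤ g x} ∈ 𝓕 := fun n =>
    (hg _).resolve_left fun h => (csInf_le hbdd h).not_gt (sub_lt_self r (hεpos n))
  refine ⟨r, ⋂ n, {x | g x ≤ q n} ∩ {x | r - 1 / (n + 1) ≤ g x},
    hinter _ fun n => hinter₂ _ (hqL n) _ (hbelow n), fun x hx => ?_⟩
  simp only [Set.mem_iInter, Set.mem_inter_iff, Set.mem_ofPred_eq] at hx
  apply le_antisymm
  · exact ge_of_tendsto' (by simpa using hε.const_add r) fun n => (hx n).1.trans (hqr n).le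
  · exact le_of_tendsto' (by simpa using hε.const_sub r) fun n => (hx n).2

section TruncAbsSum

theorem summable_inv_two_pow : Summable fun n : ℕ => (2⁻¹ : ℝ) ^ n :=
  summable_geometric_of_lt_one (by norm_num) (by norm_num)

theorem summable_min_abs_inv_two_pow (a : ℕ → ℝ) : Summable fun n => min |a n| (2⁻¹ ^ n) :=
  summable_inv_two_pow.of_nonneg_of_le (fun n => by positivity) fun n => min_le_right _ _

theorem min_abs_eq_zero_iff {a c : ℝ} (hc : 0 < c) : min |a| c = 0 ↔ a = 0 :=
  ⟨fun h => by_contra fun ha => (lt_min (abs_pos.2 ha) hc).ne' h, fun h => by simp [h, hc.le]⟩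

noncomputable def truncAbsSum (f : ℕ → B1 X) : B1 X :=
  ⟨fun x => ∑' n, min |(f n : X → ℝ) x| (2⁻¹ ^ n),
    IsBaireOne.tsum_of_abs_le
      (fun n => IsBaireOne.comp (φ := fun t => min |t| (2⁻¹ ^ n)) (by fun_prop) (f n).2)
      summable_inv_two_pow fun n x => by rw [abs_of_nonneg (by positivity)]; exact min_le_right _ _⟩

variable (f : ℕ → B1 X)

theorem truncAbsSum_apply (x : X) :
    (truncAbsSum f : X → ℝ) x = ∑' n, min |(f n : X → ℝ) x| (2⁻¹ ^ n) := rfl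

theorem truncAbsSum_nonneg (x : X) : 0 ≤ (truncAbsSum f : X → ℝ) x :=
  tsum_nonneg fun n => by positivity

theorem zset_truncAbsSum : zset (truncAbsSum f) = ⋂ n, zset (f n) := by
  ext x
  simp only [zset, Set.mem_ofPred_eq, Set.mem_iInter, truncAbsSum_apply]
  rw [← (summable_min_abs_inv_two_pow _).hasSum_iff,
    hasSum_zero_iff_of_nonneg fun n => by positivity, funext_iff]
  exact forall_congr' fun n => min_abs_eq_zero_iff (by positivity)

theorem truncAbsSum_le {N : ℕ} {x : X} (hx : x ∈ ⋂ n < N, zset (f n)) :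
    (truncAbsSum f : X → ℝ) x ≤ 2 * 2⁻¹ ^ N := by
  rw [truncAbsSum_apply, ← tsum_geometric_inv_two_ge N]
  refine (summable_min_abs_inv_two_pow _).tsum_le_tsum (fun n => ?_)
    (summable_inv_two_pow.of_nonneg_of_le (fun n => by split_ifs <;> positivity)
      fun n => by split_ifs <;> [exact le_rfl; positivity])
  split_ifs with hn
  · exact min_le_right _ _
  · have hfx : (f n : X → ℝ) x = 0 := Set.mem_iInter₂.1 hx n (not_le.1 hn)
    simp [hfx]

end TruncAbsSum

section Main

variable {M : Ideal (B1 X)}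

theorem iInter_nonempty_of_realIdeal (hM : M.IsMaximal) (hreal : RealIdeal M) {Z : ℕ → Set X}
    (hZ : ∀ n, Z n ∈ zbi M) : (⋂ n, Z n).Nonempty := by
  by_contra hempty
  choose f hfM hfZ using hZ
  obtain rfl : Z = fun n => zset (f n) := funext fun n => (hfZ n).symm
  set s := truncAbsSum f
  have hs_pos : ∀ x, 0 < (s : X → ℝ) x := fun x =>
    (truncAbsSum_nonneg f x).lt_of_ne' fun hx => hempty ⟨x, zset_truncAbsSum f ▸ hx⟩
  obtain ⟨r, hr⟩ := hreal (Ideal.Quotient.mk M s)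
  have hrM : bconst X r - s ∈ M := Ideal.Quotient.eq.1 hr
  have hlevel : ∀ x ∈ zset (bconst X r - s), (s : X → ℝ) x = r := fun x hx =>
    (sub_eq_zero.1 hx).symm
  obtain ⟨x₀, hx₀⟩ := nonempty_of_mem_zbi hM.ne_top ⟨_, hrM, rfl⟩
  have hr_pos : 0 < r := hlevel x₀ hx₀ ▸ hs_pos x₀
  obtain ⟨N, hN⟩ := exists_pow_lt_of_lt_one (half_pos hr_pos) (by norm_num : (2⁻¹ : ℝ) < 1)
  obtain ⟨x, hx, hxN⟩ := nonempty_of_mem_zbi hM.ne_top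
    (inter_mem_zbi ⟨_, hrM, rfl⟩ (biInter_lt_mem_zbi (fun n => ⟨f n, hfM n, rfl⟩) N))
  linarith [hlevel x hx, truncAbsSum_le f hxN]

theorem iInter_mem_zbi_of_iInter_nonempty (hM : M.IsMaximal)
    (hcip : ∀ Z : ℕ → Set X, (∀ n, Z n ∈ zbi M) → (⋂ n, Z n).Nonempty) {Z : ℕ → Set X}
    (hZ : ∀ n, Z n ∈ zbi M) : ⋂ n, Z n ∈ zbi M := by
  choose f hfM hfZ using hZ
  obtain rfl : Z = fun n => zset (f n) := funext fun n => (hfZ n).symm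
  refine ⟨truncAbsSum f, ?_, zset_truncAbsSum f⟩
  by_contra hs
  obtain ⟨m, hm, hdisj⟩ := exists_mem_disjoint_zset_of_notMem hM hs
  obtain ⟨x, hx⟩ := hcip (fun n => zset m ∩ zset (f n))
    fun n => inter_mem_zbi ⟨m, hm, rfl⟩ ⟨f n, hfM n, rfl⟩
  rw [← Set.inter_iInter, ← zset_truncAbsSum] at hx
  exact hdisj.ne_of_mem hx.2 hx.1 rfl

theorem realIdeal_of_iInter_mem (hM : M.IsMaximal)
    (hinter : ∀ Z : ℕ → Set X, (∀ n, Z n ∈ zbi M) → ⋂ n, Z n ∈ zbi M) : RealIdeal M := by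
  intro a
  obtain ⟨g, rfl⟩ := Ideal.Quotient.mk_surjective a
  obtain ⟨r, W, ⟨w, hw, rfl⟩, hW⟩ := exists_subset_setOf_eq_of_iInter_mem
    (fun h => (nonempty_of_mem_zbi hM.ne_top h).ne_empty rfl) (fun _ h₁ _ h₂ => inter_mem_zbi h₁ h₂)
    hinter (setOf_le_mem_zbi_or_setOf_ge_mem_zbi hM.isPrime g)
  refine ⟨r, Ideal.Quotient.eq.2 (mem_of_zset_subset hM hw fun x hx => ?_)⟩
  exact sub_eq_zero.2 (hW hx).symm

end Main

/-- A maximal ideal `M` of `B₁(X)` is real iff `Z_B[M]` is closed under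
countable intersections, iff `Z_B[M]` has the countable intersection property. -/
theorem real_maximal_tfae {X : Type*} [TopologicalSpace X]
    (M : Ideal (B1 X)) (hM : M.IsMaximal) :
    [RealIdeal M,
     ∀ Z : ℕ → Set X, (∀ n, Z n ∈ zbi M) → (⋂ n, Z n) ∈ zbi M,
     ∀ Z : ℕ → Set X, (∀ n, Z n ∈ zbi M) → (⋂ n, Z n).Nonempty].TFAE := by
  tfae_have 1 → 3 := fun hreal _ => iInter_nonempty_of_realIdeal hM hreal
  tfae_have 3 → 2 := fun hcip _ => iInter_mem_zbi_of_iInter_nonempty hM hcip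
  tfae_have 2 → 1 := realIdeal_of_iInter_mem hM
  tfae_finish
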